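/- arXiv:2104.09899 — 3 statements merged into one kernel-verified Lean document; each statement's English description precedes it below -/
import Mathlib

section
/- For every natural number n and real x, |x|ⁿ ≤ √(n!) · cⁿ · e^{x²/(2c²)} for any c > 0. In particular, ∫ℝ |x|ⁿ p(x) e^{-x²/c²} dx ≤ √(n!) · cⁿ · ∫ℝ |p(x)| e^{-x²/(2c²)} dx for any polynomial p. -/
/-!
The Taylor series of `exp` gives `(t²)ⁿ / n! ≤ exp (t²)`; taking square roots and rescaling
`t = x / c` yields the pointwise bound. Multiplying it by `|p x| e^{-x²/c²}` trades the factor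
`|x|ⁿ` for half of the Gaussian decay, and the remaining `|p x| e^{-x²/(2c²)}` is integrable.
-/

open MeasureTheory Real
open scoped Nat

lemma abs_pow_le_sqrt_factorial_mul_exp_sq_div_two (n : ℕ) (t : ℝ) :
    |t| ^ n ≤ √(n ! : ℝ) * exp (t ^ 2 / 2) := by
  have htaylor : (t ^ 2) ^ n ≤ (n ! : ℝ) * exp (t ^ 2) := by
    have := pow_div_factorial_le_exp (t ^ 2) (sq_nonneg t) n
    rwa [div_le_iff₀ (by positivity), mul_comm] at this
  refine (pow_le_pow_iff_left₀ (by positivity) (by positivity) two_ne_zero).mp ?_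
  calc (|t| ^ n) ^ 2 = (t ^ 2) ^ n := by rw [← pow_mul, mul_comm, pow_mul, sq_abs]
    _ ≤ n ! * exp (t ^ 2) := htaylor
    _ = (√(n ! : ℝ) * exp (t ^ 2 / 2)) ^ 2 := by
      rw [mul_pow, sq_sqrt (by positivity), ← exp_nat_mul]
      ring_nf

lemma abs_pow_le_sqrt_factorial_mul_pow_mul_exp (n : ℕ) {c : ℝ} (hc : 0 < c) (x : ℝ) :
    |x| ^ n ≤ √(n ! : ℝ) * c ^ n * exp (x ^ 2 / (2 * c ^ 2)) := by
  calc |x| ^ n = c ^ n * |x / c| ^ n := by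
        rw [abs_div, abs_of_pos hc, div_pow, mul_div_cancel₀ _ (by positivity)]
    _ ≤ c ^ n * (√(n ! : ℝ) * exp ((x / c) ^ 2 / 2)) :=
      mul_le_mul_of_nonneg_left (abs_pow_le_sqrt_factorial_mul_exp_sq_div_two n _) (by positivity)
    _ = √(n ! : ℝ) * c ^ n * exp (x ^ 2 / (2 * c ^ 2)) := by ring_nf

lemma abs_pow_mul_exp_neg_sq_div_le (n : ℕ) {c : ℝ} (hc : 0 < c) (x : ℝ) :
    |x| ^ n * exp (-x ^ 2 / c ^ 2) ≤ √(n ! : ℝ) * c ^ n * exp (-x ^ 2 / (2 * c ^ 2)) := by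
  have hsplit : exp (-x ^ 2 / (2 * c ^ 2)) = exp (x ^ 2 / (2 * c ^ 2)) * exp (-x ^ 2 / c ^ 2) := by
    rw [← exp_add]
    congr 1
    field_simp
    ring
  rw [hsplit, ← mul_assoc]
  exact mul_le_mul_of_nonneg_right (abs_pow_le_sqrt_factorial_mul_pow_mul_exp n hc x) (exp_pos _).le

lemma integrable_pow_mul_exp_neg_mul_sq {b : ℝ} (hb : 0 < b) (k : ℕ) :
    Integrable fun x : ℝ => x ^ k * exp (-b * x ^ 2) := by
  simpa using integrable_rpow_mul_exp_neg_mul_sq hb (s := k) (by linarith [k.cast_nonneg (α := ℝ)])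

lemma Polynomial.integrable_eval_mul_exp_neg_mul_sq {b : ℝ} (hb : 0 < b) (p : Polynomial ℝ) :
    Integrable fun x : ℝ => p.eval x * exp (-b * x ^ 2) := by
  induction p using Polynomial.induction_on' with
  | monomial k a =>
    simpa [mul_assoc] using (integrable_pow_mul_exp_neg_mul_sq hb k).const_mul a
  | add p q hp hq => exact (hp.add hq).congr (.of_forall fun x => by simp [add_mul])

lemma Polynomial.integrable_abs_eval_mul_exp_neg_sq_div {d : ℝ} (hd : 0 < d) (p : Polynomial ℝ) :
    Integrable fun x : ℝ => |p.eval x| * exp (-x ^ 2 / d) := by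
  have h := (p.integrable_eval_mul_exp_neg_mul_sq (inv_pos.mpr hd)).abs
  simp only [abs_mul, abs_exp] at h
  convert h using 4
  ring

/-- For every `n : ℕ` and `c > 0`, `|x|^n ≤ √(n!) · cⁿ · exp (x²/(2c²))`
for all real `x`; in particular, for any polynomial `p`,
`∫ |x|ⁿ p(x) e^{-x²/c²} dx ≤ √(n!) · cⁿ · ∫ |p(x)| e^{-x²/(2c²)} dx`. -/
theorem abs_pow_le_sqrt_factorial_mul_exp (n : ℕ) (c : ℝ) (hc : 0 < c) :
    (∀ x : ℝ, |x| ^ n ≤ Real.sqrt (Nat.factorial n : ℝ) * c ^ n * Real.exp (x ^ 2 / (2 * c ^ 2))) ∧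
    (∀ p : Polynomial ℝ,
      (∫ x : ℝ, |x| ^ n * p.eval x * Real.exp (-x ^ 2 / c ^ 2)) ≤
        Real.sqrt (Nat.factorial n : ℝ) * c ^ n *
          ∫ x : ℝ, |p.eval x| * Real.exp (-x ^ 2 / (2 * c ^ 2))) := by
  refine ⟨abs_pow_le_sqrt_factorial_mul_pow_mul_exp n hc, fun p => ?_⟩
  have hbound : ∀ x : ℝ, ‖|x| ^ n * p.eval x * exp (-x ^ 2 / c ^ 2)‖ ≤
      √(n ! : ℝ) * c ^ n * (|p.eval x| * exp (-x ^ 2 / (2 * c ^ 2))) := fun x => by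
    simp only [norm_mul, norm_pow, Real.norm_eq_abs, abs_abs, abs_exp]
    rw [mul_right_comm, mul_comm]
    exact (mul_le_mul_of_nonneg_left (abs_pow_mul_exp_neg_sq_div_le n hc x) (abs_nonneg _)).trans_eq
      (by ring)
  have hint := (p.integrable_abs_eval_mul_exp_neg_sq_div (by positivity : 0 < 2 * c ^ 2)).const_mul
    (√(n ! : ℝ) * c ^ n)
  calc _ ≤ ‖∫ x : ℝ, |x| ^ n * p.eval x * exp (-x ^ 2 / c ^ 2)‖ := le_abs_self _
    _ ≤ ∫ x : ℝ, √(n ! : ℝ) * c ^ n * (|p.eval x| * exp (-x ^ 2 / (2 * c ^ 2))) :=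
      norm_integral_le_of_norm_le hint (.of_forall hbound)
    _ = _ := integral_const_mul _ _
end

section
/- Let α, β be 2×2 complex matrices satisfying α² = 1, β² = β, βαβ = 0, e₁ᵀαe₁ = 1, e₁ᵀ(αβα)e₁ = 0, e₁ᵀ(αβ)e₁ = 0, e₁ᵀ(βα)e₁ = 1, e₁ᵀβe₁ = 1. Then for noncommuting indeterminates X, Y in a tensor algebra, e₁ᵀ (αX + βY)^{n−1} e₁ = Σ over tuples (v₁,…,v_k; w₁,…,w_k; p) with v₁ ≥ 0, v₂,…,v_k ≥ 1, wⱼ ≥ 1, p ≥ 0 and 2|v| + |w| + p = n − 1 of (X²)^{v₁} Y^{w₁} ⋯ (X²)^{v_k} Y^{w_k} X^{p}. -/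
open FreeAlgebra

/-- The free (tensor) algebra on two noncommuting indeterminates `X`, `Y`. -/
abbrev TensAlg : Type := FreeAlgebra ℂ (Fin 2)

/-- The indeterminate `X`. -/
noncomputable def Xg : TensAlg := FreeAlgebra.ι ℂ (0 : Fin 2)

/-- The indeterminate `Y`. -/
noncomputable def Yg : TensAlg := FreeAlgebra.ι ℂ (1 : Fin 2)

/-- The word `(X²)^{v₁} Y^{w₁} ⋯ (X²)^{v_k} Y^{w_k} X^{p}` encoded by a list of pairs
`(vᵢ, wᵢ)` together with `p`. -/
noncomputable def wordOf (x : List (ℕ × ℕ) × ℕ) : TensAlg :=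
  (x.1.map fun q => (Xg * Xg) ^ q.1 * Yg ^ q.2).prod * Xg ^ x.2

/-- The admissible tuples of total degree `m`: `v₁ ≥ 0`, `v₂,…,v_k ≥ 1`, `wⱼ ≥ 1`, `p ≥ 0`
with `2|v| + |w| + p = m`. -/
def admissible (m : ℕ) : Set (List (ℕ × ℕ) × ℕ) :=
  {x | (∀ q ∈ x.1.tail, 1 ≤ q.1) ∧ (∀ q ∈ x.1, 1 ≤ q.2) ∧
    2 * (x.1.map Prod.fst).sum + (x.1.map Prod.snd).sum + x.2 = m}

/-! With `a := α 0 1`, `b := β 1 0`, the relations force `α = !![1, a; 0, -1]`,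
`β = !![1, 0; b, 0]` and `a * b = -1`, so `M = αX + βY = !![X + Y, a X; b Y, -X]`.
Since `M 0 1 * M 1 1 = -X * M 0 1`, the entries `P m = (M ^ m) 0 0` satisfy
`P (m + 2) = Y * P (m + 1) + X² * P m`. The admissible words satisfy the same recursion:
one of degree `m + 2` starts either with `Y` or with `X²`, and deleting that prefix is a
bijection onto the admissible words of degree `m + 1`, resp. `m`. -/

namespace Matrix

theorem map_algebraMap_mul_scalar_add_apply {R A n : Type*} [CommSemiring R] [Semiring A]
    [Algebra R A] [Fintype n] [DecidableEq n] (α β : Matrix n n R) (x y : A) (i j : n) :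
    (α.map (algebraMap R A) * scalar n x + β.map (algebraMap R A) * scalar n y) i j
      = α i j • x + β i j • y := by
  simp [scalar_apply, mul_diagonal, Algebra.smul_def]

theorem pow_add_two_apply_zero_zero {A : Type*} [Ring A] (N : Matrix (Fin 2) (Fin 2) A) {d : A}
    (hd : N 0 1 * N 1 1 = d * N 0 1) (m : ℕ) :
    (N ^ (m + 2)) 0 0
      = (N 0 0 + d) * (N ^ (m + 1)) 0 0 + (N 0 1 * N 1 0 - d * N 0 0) * (N ^ m) 0 0 := by
  have hpow : ∀ k i, (N ^ (k + 1)) i 0 = N i 0 * (N ^ k) 0 0 + N i 1 * (N ^ k) 1 0 :=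
    fun k i => by rw [pow_succ', mul_apply, Fin.sum_univ_two]
  have hd' : N 0 1 * (N 1 1 * (N ^ m) 1 0) = d * (N 0 1 * (N ^ m) 1 0) := by
    rw [← mul_assoc, hd, mul_assoc]
  rw [hpow (m + 1), hpow m 1, hpow m 0, mul_add (N 0 1), hd']
  noncomm_ring

end Matrix

theorem fin_two_eq_of_relations {K : Type*} [Field K] [NeZero (2 : K)]
    {α β : Matrix (Fin 2) (Fin 2) K} (hα2 : α * α = 1) (hβ2 : β * β = β)
    (hβαβ : β * α * β = 0) (hα00 : α 0 0 = 1) (hαβ : (α * β) 0 0 = 0) (hβ00 : β 0 0 = 1) :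
    α = !![1, α 0 1; 0, -1] ∧ β = !![1, 0; β 1 0, 0] ∧ α 0 1 * β 1 0 = -1 := by
  obtain ⟨a, b, c, d, rfl⟩ : ∃ a b c d, α = !![a, b; c, d] := ⟨_, _, _, _, α.eta_fin_two⟩
  obtain ⟨e, f, g, h, rfl⟩ : ∃ e f g h, β = !![e, f; g, h] := ⟨_, _, _, _, β.eta_fin_two⟩
  simp [Matrix.one_fin_two, ← Matrix.ext_iff, Fin.forall_fin_two] at hα2 hβ2 hβαβ hα00 hαβ hβ00 ⊢
  subst hα00 hβ00
  obtain ⟨⟨hbc, hbd⟩, -⟩ := hα2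
  obtain ⟨⟨hfg, -⟩, -, hfh⟩ := hβ2
  obtain ⟨-, -, hh⟩ := hβαβ
  have hc : c = 0 := by linear_combination c * hαβ - g * hbc
  have hd : d = -1 := by linear_combination (1 + d) * hαβ - g * hbd
  have hf : f = 0 := by linear_combination f * hαβ - b * hfg
  subst hc hd hf
  have h2 : 2 * h = 0 := by linear_combination h * hαβ - hh - hfh
  exact ⟨⟨rfl, rfl, rfl⟩, ⟨⟨rfl, rfl⟩, (mul_eq_zero.1 h2).resolve_left two_ne_zero⟩,
    by linear_combination hαβ⟩

def prependY : List (ℕ × ℕ) × ℕ → List (ℕ × ℕ) × ℕ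
  | ((0, w) :: t, p) => ((0, w + 1) :: t, p)
  | (l, p) => ((0, 1) :: l, p)

def prependXSq : List (ℕ × ℕ) × ℕ → List (ℕ × ℕ) × ℕ
  | ([], p) => ([], p + 2)
  | ((v, w) :: t, p) => ((v + 1, w) :: t, p)

theorem wordOf_prependY (x : List (ℕ × ℕ) × ℕ) : wordOf (prependY x) = Yg * wordOf x := by
  match x with
  | ([], p) => simp [prependY, wordOf]
  | ((0, w) :: t, p) => simp [prependY, wordOf, pow_succ', mul_assoc]
  | ((v + 1, w) :: t, p) => simp [prependY, wordOf, mul_assoc]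

theorem wordOf_prependXSq (x : List (ℕ × ℕ) × ℕ) :
    wordOf (prependXSq x) = Xg * Xg * wordOf x := by
  match x with
  | ([], p) => simp [prependXSq, wordOf, pow_succ', mul_assoc]
  | ((v, w) :: t, p) => simp [prependXSq, wordOf, pow_succ', mul_assoc]

theorem prependXSq_injective : Function.Injective prependXSq := by
  rintro ⟨_ | ⟨⟨v, w⟩, t⟩, p⟩ ⟨_ | ⟨⟨v', w'⟩, t'⟩, p'⟩ h <;> simp_all [prependXSq]

theorem prependY_injOn : Set.InjOn prependY {x | ∀ q ∈ x.1, 1 ≤ q.2} := by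
  rintro ⟨_ | ⟨⟨_ | v, w⟩, t⟩, p⟩ hx ⟨_ | ⟨⟨_ | v', w'⟩, t'⟩, p'⟩ hx' h <;>
    simp only [prependY, Set.mem_ofPred_eq, List.forall_mem_cons, Prod.mk.injEq,
      List.cons.injEq] at hx hx' h ⊢ <;>
    grind

@[simp]
theorem nil_mem_admissible_iff {m p : ℕ} : (([], p) : List (ℕ × ℕ) × ℕ) ∈ admissible m ↔ p = m := by
  simp [admissible]

@[simp]
theorem cons_mem_admissible_iff {m v w p : ℕ} {t : List (ℕ × ℕ)} :
    ((v, w) :: t, p) ∈ admissible m ↔ (∀ q ∈ t, 1 ≤ q.1) ∧ 1 ≤ w ∧ (∀ q ∈ t, 1 ≤ q.2) ∧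
      2 * v + w + 2 * (t.map Prod.fst).sum + (t.map Prod.snd).sum + p = m := by
  simp only [admissible, Set.mem_ofPred_eq, List.tail_cons, List.forall_mem_cons, List.map_cons,
    List.sum_cons]
  constructor <;> rintro ⟨h1, h2, h3⟩ <;> grind

theorem prependY_eq_of_forall_mem {l : List (ℕ × ℕ)} (h : ∀ q ∈ l, 1 ≤ q.1) (p : ℕ) :
    prependY (l, p) = ((0, 1) :: l, p) := by
  match l, h with
  | [], _ => rfl
  | (v + 1, w) :: t, _ => rfl
  | (0, w) :: t, h => exact absurd (h _ List.mem_cons_self) (by simp)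

theorem prependY_mem_admissible {m : ℕ} {x : List (ℕ × ℕ) × ℕ} (hx : x ∈ admissible m) :
    prependY x ∈ admissible (m + 1) := by
  match x, hx with
  | ([], p), hx => simp_all [prependY, add_comm]
  | ((0, w) :: t, p), hx =>
    obtain ⟨hv, -, hw, hdeg⟩ := cons_mem_admissible_iff.1 hx
    exact cons_mem_admissible_iff.2 ⟨hv, by omega, hw, by omega⟩
  | ((v + 1, w) :: t, p), hx =>
    obtain ⟨hv, hw₀, hw, hdeg⟩ := cons_mem_admissible_iff.1 hx
    refine cons_mem_admissible_iff.2 ⟨List.forall_mem_cons.2 ⟨by simp, hv⟩, le_rfl,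
      List.forall_mem_cons.2 ⟨hw₀, hw⟩, ?_⟩
    simp only [List.map_cons, List.sum_cons]
    omega

theorem prependXSq_mem_admissible {m : ℕ} {x : List (ℕ × ℕ) × ℕ} (hx : x ∈ admissible m) :
    prependXSq x ∈ admissible (m + 2) := by
  match x, hx with
  | ([], p), hx => simpa [prependXSq] using hx
  | ((v, w) :: t, p), hx =>
    obtain ⟨hv, hw₀, hw, hdeg⟩ := cons_mem_admissible_iff.1 hx
    exact cons_mem_admissible_iff.2 ⟨hv, hw₀, hw, by omega⟩

theorem admissible_add_two_subset (m : ℕ) :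
    admissible (m + 2) ⊆ prependY '' admissible (m + 1) ∪ prependXSq '' admissible m := by
  rintro ⟨l, p⟩ hx
  match l, hx with
  | [], hx => exact .inr ⟨([], m), by simp, by simp_all [prependXSq]⟩
  | (v + 1, w) :: t, hx =>
    obtain ⟨hv, hw₀, hw, hdeg⟩ := cons_mem_admissible_iff.1 hx
    exact .inr ⟨((v, w) :: t, p), cons_mem_admissible_iff.2 ⟨hv, hw₀, hw, by omega⟩, rfl⟩
  | (0, w + 2) :: t, hx =>
    obtain ⟨hv, -, hw, hdeg⟩ := cons_mem_admissible_iff.1 hx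
    exact .inl ⟨((0, w + 1) :: t, p), cons_mem_admissible_iff.2 ⟨hv, by omega, hw, by omega⟩, rfl⟩
  | (0, 1) :: t, hx =>
    obtain ⟨hv, -, hw, hdeg⟩ := cons_mem_admissible_iff.1 hx
    refine .inl ⟨(t, p), ⟨fun q hq => hv q (List.mem_of_mem_tail hq), hw, by dsimp only; omega⟩,
      prependY_eq_of_forall_mem hv p⟩
  | (0, 0) :: t, hx => simp at hx

theorem admissible_zero : admissible 0 = {([], 0)} := by
  ext ⟨_ | ⟨⟨v, w⟩, t⟩, p⟩
  · simp
  · simp only [cons_mem_admissible_iff, Set.mem_singleton_iff, Prod.mk.injEq, reduceCtorEq,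
      false_and, iff_false]
    rintro ⟨-, hw, -, h⟩
    omega

theorem admissible_one : admissible 1 = {([], 1), ([(0, 1)], 0)} := by
  ext ⟨_ | ⟨⟨v, w⟩, t⟩, p⟩
  · simp
  · simp only [cons_mem_admissible_iff, Set.mem_insert_iff, Set.mem_singleton_iff,
      Prod.mk.injEq, List.cons.injEq, reduceCtorEq, false_and, false_or]
    constructor
    · rintro ⟨-, hw₀, hw, hdeg⟩
      cases t with
      | nil => simp only [List.map_nil, List.sum_nil, and_true] at hdeg ⊢; omega
      | cons q t =>
        have := hw q List.mem_cons_self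
        simp only [List.map_cons, List.sum_cons] at hdeg
        omega
    · rintro ⟨⟨⟨rfl, rfl⟩, rfl⟩, rfl⟩
      simp

theorem admissible_add_two (m : ℕ) :
    admissible (m + 2) = prependY '' admissible (m + 1) ∪ prependXSq '' admissible m :=
  (admissible_add_two_subset m).antisymm <| Set.union_subset
    (Set.image_subset_iff.2 fun _ => prependY_mem_admissible)
    (Set.image_subset_iff.2 fun _ => prependXSq_mem_admissible)

theorem admissible_finite (m : ℕ) : (admissible m).Finite := by
  induction m using Nat.twoStepInduction with
  | zero => simp [admissible_zero]
  | one => simp [admissible_one]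
  | more m h₀ h₁ => rw [admissible_add_two]; exact (h₁.image _).union (h₀.image _)

theorem disjoint_image_prependY_image_prependXSq (s t : Set (List (ℕ × ℕ) × ℕ)) :
    Disjoint (prependY '' s) (prependXSq '' t) := by
  refine Set.disjoint_left.2 ?_
  rintro _ ⟨⟨_ | ⟨⟨_ | v, w⟩, l⟩, p⟩, -, rfl⟩ ⟨⟨_ | ⟨⟨v', w'⟩, l'⟩, p'⟩, -, h⟩ <;>
    simp [prependY, prependXSq] at h

theorem finsum_wordOf_admissible_zero : ∑ᶠ x ∈ admissible 0, wordOf x = 1 := by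
  simp [admissible_zero, wordOf]

theorem finsum_wordOf_admissible_one : ∑ᶠ x ∈ admissible 1, wordOf x = Xg + Yg := by
  rw [admissible_one, finsum_mem_pair (by simp)]
  simp [wordOf]

theorem finsum_wordOf_admissible_add_two (m : ℕ) :
    ∑ᶠ x ∈ admissible (m + 2), wordOf x
      = Yg * ∑ᶠ x ∈ admissible (m + 1), wordOf x + Xg * Xg * ∑ᶠ x ∈ admissible m, wordOf x := by
  have hY : Set.InjOn prependY (admissible (m + 1)) := prependY_injOn.mono fun _ hx => hx.2.1
  rw [admissible_add_two, finsum_mem_union (disjoint_image_prependY_image_prependXSq _ _)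
      ((admissible_finite _).image _) ((admissible_finite _).image _),
    finsum_mem_image hY, finsum_mem_image prependXSq_injective.injOn,
    mul_finsum_mem' _ _ (admissible_finite _), mul_finsum_mem' _ _ (admissible_finite _)]
  simp only [wordOf_prependY, wordOf_prependXSq]

theorem word_expansion_general (α β : Matrix (Fin 2) (Fin 2) ℂ)
    (hα2 : α * α = 1) (hβ2 : β * β = β) (hβαβ : β * α * β = 0)
    (hα11 : α 0 0 = 1) (hαβ : (α * β) 0 0 = 0) (hβ11 : β 0 0 = 1) :
    ∀ m : ℕ,
      ((α.map (algebraMap ℂ TensAlg) * Matrix.scalar (Fin 2) Xg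
          + β.map (algebraMap ℂ TensAlg) * Matrix.scalar (Fin 2) Yg) ^ m) 0 0
        = ∑ᶠ x ∈ admissible m, wordOf x := by
  obtain ⟨hα, hβ, hab⟩ := fin_two_eq_of_relations hα2 hβ2 hβαβ hα11 hαβ hβ11
  set M := α.map (algebraMap ℂ TensAlg) * Matrix.scalar (Fin 2) Xg
    + β.map (algebraMap ℂ TensAlg) * Matrix.scalar (Fin 2) Yg
  have hM : ∀ i j, M i j = α i j • Xg + β i j • Yg :=
    Matrix.map_algebraMap_mul_scalar_add_apply α β Xg Yg
  have h00 : M 0 0 = Xg + Yg := by simp [hM, hα11, hβ11]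
  have h01 : M 0 1 = α 0 1 • Xg := by simp [hM, congr_fun₂ hβ 0 1]
  have h10 : M 1 0 = β 1 0 • Yg := by simp [hM, congr_fun₂ hα 1 0]
  have h11 : M 1 1 = -Xg := by simp [hM, congr_fun₂ hα 1 1, congr_fun₂ hβ 1 1]
  intro m
  induction m using Nat.twoStepInduction with
  | zero => simp [finsum_wordOf_admissible_zero]
  | one => simp [h00, finsum_wordOf_admissible_one]
  | more m ih₀ ih₁ =>
    have hd : M 0 1 * M 1 1 = -Xg * M 0 1 := by simp [h01, h11]
    rw [M.pow_add_two_apply_zero_zero hd, ih₀, ih₁, finsum_wordOf_admissible_add_two, h00, h01,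
      h10, smul_mul_smul_comm, hab, neg_one_smul]
    noncomm_ring

/-- Let `α`, `β` be `2×2` complex matrices with `α² = 1`, `β² = β`,
`βαβ = 0`, `e₁ᵀαe₁ = 1`, `e₁ᵀ(αβα)e₁ = 0`, `e₁ᵀ(αβ)e₁ = 0`, `e₁ᵀ(βα)e₁ = 1`, `e₁ᵀβe₁ = 1`.
Then for noncommuting indeterminates `X`, `Y`,
`e₁ᵀ (αX + βY)^m e₁ = Σ (X²)^{v₁} Y^{w₁} ⋯ (X²)^{v_k} Y^{w_k} X^{p}`, the sum being over all
tuples with `v₁ ≥ 0`, `v₂,…,v_k ≥ 1`, `wⱼ ≥ 1`, `p ≥ 0` and `2|v| + |w| + p = m`. -/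
theorem word_expansion (α β : Matrix (Fin 2) (Fin 2) ℂ)
    (hα2 : α * α = 1) (hβ2 : β * β = β) (hβαβ : β * α * β = 0)
    (hα11 : α 0 0 = 1) (hαβα : (α * β * α) 0 0 = 0) (hαβ : (α * β) 0 0 = 0)
    (hβα : (β * α) 0 0 = 1) (hβ11 : β 0 0 = 1) :
    ∀ m : ℕ,
      ((α.map (algebraMap ℂ TensAlg) * Matrix.scalar (Fin 2) Xg
          + β.map (algebraMap ℂ TensAlg) * Matrix.scalar (Fin 2) Yg) ^ m) 0 0
        = ∑ᶠ x ∈ admissible m, wordOf x :=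
  word_expansion_general α β hα2 hβ2 hβαβ hα11 hαβ hβ11
end

section
/- With ∫_φ as above satisfying the near-traciality rules (∫_φ XY = ∫_φ YX for X, Y even; ∫_φ (AX − XA) = ∫_φ d(AX) for X odd and A a one-form; ∫_φ (XA − AX) = ∫_φ dX·A + ∫_φ dA·dX for X even), and with A_t = tA, F_t = dA_t + A_t² satisfying the Bianchi identity d(F_tᵐ) = [F_tᵐ, A_t], one has ∫_φ d(A_t² F_tᵐ) = 0 for every m ≥ 0. -/
/-- Let `∫_φ = I` be a linear functional on a graded differential algebra
satisfying the near-traciality rules: `I(XY) = I(YX)` for `X`, `Y` even;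
`I(A'X − XA') = I(d(A'X))` for `X` odd and `A'` a one-form;
`I(XA' − A'X) = I(dX·A') + I(dA'·dX)` for `X` even and `A'` a one-form.
With `A_t = tA`, `F_t = dA_t + A_t²` satisfying the Bianchi identity
`d(F_tᵐ) = [F_tᵐ, A_t]`, one has `∫_φ d(A_t² F_tᵐ) = 0` for every `m ≥ 0`. -/
theorem integral_d_At_sq_Ft_pow_eq_zero
    {Ω : Type*} [Ring Ω] [Algebra ℂ Ω]
    (𝒢 : ℕ → Submodule ℂ Ω) [SetLike.GradedMonoid 𝒢]
    (d : Ω →ₗ[ℂ] Ω)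
    (hd2 : ∀ ω : Ω, d (d ω) = 0)
    (hdg : ∀ n : ℕ, ∀ ω ∈ 𝒢 n, d ω ∈ 𝒢 (n + 1))
    (hLeib : ∀ n : ℕ, ∀ x ∈ 𝒢 n, ∀ y : Ω,
      d (x * y) = d x * y + ((-1 : ℂ) ^ n) • (x * d y))
    (I : Ω →ₗ[ℂ] ℂ)
    (A : Ω) (hA : A ∈ 𝒢 1)
    (R1 : ∀ (n m : ℕ), Even n → Even m → ∀ X ∈ 𝒢 n, ∀ Y ∈ 𝒢 m, I (X * Y) = I (Y * X))
    (R2 : ∀ A' ∈ 𝒢 1, ∀ (n : ℕ), Odd n → ∀ X ∈ 𝒢 n,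
      I (A' * X - X * A') = I (d (A' * X)))
    (R3 : ∀ A' ∈ 𝒢 1, ∀ (n : ℕ), Even n → ∀ X ∈ 𝒢 n,
      I (X * A' - A' * X) = I (d X * A') + I (d A' * d X))
    (hBianchi : ∀ (t : ℝ) (m : ℕ), 1 ≤ m →
      d (((t : ℂ) • d A + ((t : ℂ)) ^ 2 • (A * A)) ^ m)
        = ((t : ℂ) • d A + ((t : ℂ)) ^ 2 • (A * A)) ^ m * ((t : ℂ) • A)
          - ((t : ℂ) • A) * ((t : ℂ) • d A + ((t : ℂ)) ^ 2 • (A * A)) ^ m) :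
    ∀ (t : ℝ) (m : ℕ),
      I (d (((t : ℂ) • A) * ((t : ℂ) • A) *
          ((t : ℂ) • d A + ((t : ℂ)) ^ 2 • (A * A)) ^ m)) = 0 := by
  intro t m
  set B : Ω := (t : ℂ) • A with hBdef
  set F : Ω := (t : ℂ) • d A + ((t : ℂ)) ^ 2 • (A * A) with hFdef
  -- basic memberships
  have hB : B ∈ 𝒢 1 := Submodule.smul_mem _ _ hA
  have hdA2 : d A ∈ 𝒢 2 := by simpa using hdg 1 A hA
  have hAA : A * A ∈ 𝒢 2 := by simpa using SetLike.mul_mem_graded hA hA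
  have hF2 : F ∈ 𝒢 2 := Submodule.add_mem _ (Submodule.smul_mem _ _ hdA2)
    (Submodule.smul_mem _ _ hAA)
  have hFm : ∀ k : ℕ, F ^ k ∈ 𝒢 (2 * k) := by
    intro k
    induction k with
    | zero => simpa using (SetLike.one_mem_graded 𝒢 : (1 : Ω) ∈ 𝒢 0)
    | succ n ih =>
        have h := SetLike.mul_mem_graded ih hF2
        have : 2 * n + 2 = 2 * (n + 1) := by ring
        rw [this] at h
        simpa [pow_succ] using h
  have hdF : ∀ k : ℕ, d (F ^ k) ∈ 𝒢 (2 * k + 1) := fun k => hdg _ _ (hFm k)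
  have hdB : d B ∈ 𝒢 2 := by simpa using hdg 1 B hB
  have hd1 : d (1 : Ω) = 0 := by
    have h := hLeib 0 1 (SetLike.one_mem_graded 𝒢) 1
    simp only [one_mul, mul_one, pow_zero, one_smul] at h
    have h2 : d (1 : Ω) + 0 = d 1 + d 1 := by rw [add_zero]; exact h
    exact (add_left_cancel h2).symm
  have hdBval : d B = (t : ℂ) • d A := by rw [hBdef, map_smul]
  have hBB : B * B = ((t : ℂ)) ^ 2 • (A * A) := by
    rw [hBdef, smul_mul_smul_comm, sq]
  have hFsum : F = d B + B * B := by rw [hdBval, hBB]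
  -- Bianchi for all k
  have hBi : ∀ k : ℕ, d (F ^ k) = F ^ k * B - B * F ^ k := by
    intro k
    cases k with
    | zero => simp [hd1]
    | succ n =>
        have h := hBianchi t (n + 1) (Nat.succ_le_succ (Nat.zero_le n))
        rw [← hBdef, ← hFdef] at h
        exact h
  -- E1 : I(B·dFᵏ) + I(dFᵏ·B) = 0
  have E1 : ∀ k : ℕ, I (B * d (F ^ k)) + I (d (F ^ k) * B) = 0 := by
    intro k
    have hring : d (F ^ k) * B + F ^ k * d B - (d B * F ^ k - B * d (F ^ k)) = 0 := by
      have h0 : d (d (F ^ k)) = 0 := hd2 _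
      rw [hBi k, map_sub] at h0
      have h1 : d (F ^ k * B) = d (F ^ k) * B + F ^ k * d B := by
        rw [hLeib (2 * k) (F ^ k) (hFm k) B, Even.neg_one_pow (even_two_mul k), one_smul]
      have h2 : d (B * F ^ k) = d B * F ^ k - B * d (F ^ k) := by
        rw [hLeib 1 B hB (F ^ k)]
        simp [sub_eq_add_neg]
      rw [h1, h2] at h0
      exact h0
    have hI0 := congrArg I hring
    simp only [map_sub, map_add, map_zero] at hI0
    have hR1 : I (d B * F ^ k) = I (F ^ k * d B) :=
      R1 2 (2 * k) (by decide) (even_two_mul k) (d B) hdB (F ^ k) (hFm k)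
    linear_combination hI0 + hR1
  -- E2 : I(B·dFᵏ) − I(dFᵏ·B) = I(dB·dFᵏ)
  have E2 : ∀ k : ℕ, I (B * d (F ^ k)) - I (d (F ^ k) * B) = I (d B * d (F ^ k)) := by
    intro k
    have h := R2 B hB (2 * k + 1) (odd_two_mul_add_one k) (d (F ^ k)) (hdF k)
    have hdd : d (B * d (F ^ k)) = d B * d (F ^ k) := by
      rw [hLeib 1 B hB (d (F ^ k)), hd2]
      simp
    rw [hdd, map_sub] at h
    exact h
  -- E3 : I(d(B·B·Fᵏ)) = −I(B·dFᵏ)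
  have E3 : ∀ k : ℕ, I (d (B * B * F ^ k)) = - I (B * d (F ^ k)) := by
    intro k
    have hBF : B * F ^ k ∈ 𝒢 (1 + 2 * k) := SetLike.mul_mem_graded hB (hFm k)
    have h := R2 B hB (1 + 2 * k) ⟨k, by ring⟩ (B * F ^ k) hBF
    have hring : B * (B * F ^ k) - B * F ^ k * B = -(B * d (F ^ k)) := by
      rw [hBi k]; noncomm_ring
    rw [hring] at h
    have hass : B * (B * F ^ k) = B * B * F ^ k := by rw [mul_assoc]
    rw [hass] at h
    rw [← h, map_neg]
  -- E4 : I(d(B·B·Fᵏ)) = I(dF^{k+1}) − I(dB·dFᵏ)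
  have E4 : ∀ k : ℕ, I (d (B * B * F ^ k)) = I (d (F ^ (k + 1))) - I (d B * d (F ^ k)) := by
    intro k
    have hid : B * B * F ^ k = F ^ (k + 1) - d B * F ^ k := by
      rw [pow_succ', hFsum]; noncomm_ring
    have hdd : d (d B * F ^ k) = d B * d (F ^ k) := by
      rw [hLeib 2 (d B) hdB (F ^ k), hd2]
      simp
    rw [hid, map_sub, hdd, map_sub]
  -- E5 : I(dF^{k+1}) = I(dF^{k+1}·B) + I(dB·dF^{k+1})
  have E5 : ∀ k : ℕ, I (d (F ^ (k + 1)))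
      = I (d (F ^ (k + 1)) * B) + I (d B * d (F ^ (k + 1))) := by
    intro k
    have h := R3 B hB (2 * (k + 1)) (even_two_mul _) (F ^ (k + 1)) (hFm (k + 1))
    rw [← hBi (k + 1)] at h
    exact h
  -- main induction : I(dB·dFᵏ) = 0
  have hc : ∀ k : ℕ, I (d B * d (F ^ k)) = 0 := by
    intro k
    induction k with
    | zero => simp [hd1]
    | succ n ih =>
        have h3 := E3 n
        have h4 := E4 n
        have h1 := E1 n
        have h2 := E2 n
        have h0 : I (d (F ^ (n + 1))) = 0 := by
          linear_combination -h4 + h3 + ih / 2 - h1 / 2 - h2 / 2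
        have hE1 := E1 (n + 1)
        have hE2 := E2 (n + 1)
        have hE5 := E5 n
        linear_combination -hE1 + hE2 - 2 * hE5 + 2 * h0
  have hE3 := E3 m
  have hE1 := E1 m
  have hE2 := E2 m
  have hcm := hc m
  linear_combination hE3 - hE1 / 2 - hE2 / 2 - hcm / 2
end
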